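/- Let a ∈ Aut(T), let O₁,…,O_k be the orbits of the action of a on the first level X, let m_i = |O_i|, and for an arbitrary point x_i ∈ O_i set a_i = (a^{m_i})|_{x_i}. Then a has finite order if and only if every a_i has finite order, and in that case the order of a equals lcm(m₁·|a₁|, m₂·|a₂|, …, m_k·|a_k|). -/

import Mathlib

open List

/-- Vertices of the rooted `d`-ary tree `T`: finite words over the alphabet
`X = Fin d`. -/
abbrev Vertex (d : ℕ) := List (Fin d)

/-- `g` is an automorphism of the rooted `d`-ary tree: a bijection of the
vertex set `X*` preserving word length and the prefix relation. -/
def IsTreeAut {d : ℕ} (g : Equiv.Perm (Vertex d)) : Prop :=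
  (∀ v : Vertex d, (g v).length = v.length) ∧
    ∀ v w : Vertex d, g v <+: g (v ++ w)

theorem IsTreeAut.prefix_mono {d : ℕ} {g : Equiv.Perm (Vertex d)} (hg : IsTreeAut g)
    {u u' : Vertex d} (h : u <+: u') : g u <+: g u' := by
  obtain ⟨t, rfl⟩ := h
  exact hg.2 u t

theorem Equiv.Perm.apply_inv_self {α : Type*} (f : Equiv.Perm α) (x : α) : f (f⁻¹ x) = x :=
  Equiv.apply_symm_apply f x

/-- The automorphism group `Aut(T)` of the rooted `d`-ary tree, as a subgroup
of the group of permutations of the vertex set. -/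
def treeAut (d : ℕ) : Subgroup (Equiv.Perm (Vertex d)) where
  carrier := {g | IsTreeAut g}
  one_mem' := ⟨fun _ => rfl, fun v w => ⟨w, rfl⟩⟩
  mul_mem' := by
    intro g h hg hh
    obtain ⟨hg1, hg2⟩ := hg
    obtain ⟨hh1, hh2⟩ := hh
    refine ⟨fun v => ?_, fun v w => ?_⟩
    · simp [Equiv.Perm.mul_apply, hg1, hh1]
    · obtain ⟨t, ht⟩ := hh2 v w
      simp only [Equiv.Perm.mul_apply]
      rw [← ht]
      exact hg2 (h v) t
  inv_mem' := by
    intro g hgmem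
    obtain ⟨hg1, hg2⟩ := hgmem
    have hg : IsTreeAut g := ⟨hg1, hg2⟩
    have hlen' : ∀ v : Vertex d, (g⁻¹ v).length = v.length := by
      intro v
      conv_rhs => rw [← Equiv.Perm.apply_inv_self g v]
      rw [hg1]
    refine ⟨hlen', fun v w => ?_⟩
    have hle : (g⁻¹ v).length ≤ (g⁻¹ (v ++ w)).length := by
      have h1 := hlen' v
      have h2 := hlen' (v ++ w)
      rw [List.length_append] at h2
      omega
    have htp : (g⁻¹ (v ++ w)).take (g⁻¹ v).length <+: g⁻¹ (v ++ w) :=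
      List.take_prefix _ _
    have hgtp : g ((g⁻¹ (v ++ w)).take (g⁻¹ v).length) <+: v ++ w := by
      have := hg.prefix_mono htp
      rwa [Equiv.Perm.apply_inv_self] at this
    have hlen_tp : (g ((g⁻¹ (v ++ w)).take (g⁻¹ v).length)).length = v.length := by
      rw [hg1, List.length_take, min_eq_left hle, hlen' v]
    have hveq : g ((g⁻¹ (v ++ w)).take (g⁻¹ v).length) = v := by
      have h1 := List.prefix_iff_eq_take.mp hgtp
      have h2 := List.prefix_iff_eq_take.mp (List.prefix_append v w)
      rw [h1, hlen_tp]
      exact h2.symm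
    have hkey : (g⁻¹ (v ++ w)).take (g⁻¹ v).length = g⁻¹ v := by
      apply g.injective
      rw [hveq, Equiv.Perm.apply_inv_self]
    rw [← hkey]
    exact htp

open scoped Classical in
/-- The state (section) `g|_v` of `g` at the vertex `v` : the unique
automorphism satisfying `g (v ++ w) = g v ++ (g|_v) w` for all `w`. -/
noncomputable def state {d : ℕ} (g : Equiv.Perm (Vertex d)) (v : Vertex d) :
    Equiv.Perm (Vertex d) :=
  if h : Function.Bijective (fun w : Vertex d => (g (v ++ w)).drop v.length) then
    Equiv.ofBijective _ h
  else 1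

/-- A finite-state automorphism: one having finitely many states.  The
finite-state automorphisms form the group `F(X)`. -/
def FiniteState {d : ℕ} (g : Equiv.Perm (Vertex d)) : Prop :=
  (Set.range fun v : Vertex d => state g v).Finite

/-- The cardinality of the orbit `Orb_a(v)` of the vertex `v` under the cyclic
group generated by `a`. -/
noncomputable def orbitCard {d : ℕ} (a : Equiv.Perm (Vertex d)) (v : Vertex d) : ℕ :=
  Nat.card (Set.range fun n : ℤ => (a ^ n) v)

/-- The orbit-signalizer `OS(a) = { a^m|_v : v ∈ X^*, m = |Orb_a(v)| }`. -/
noncomputable def OS {d : ℕ} (a : Equiv.Perm (Vertex d)) : Set (Equiv.Perm (Vertex d)) :=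
  {s | ∃ v : Vertex d, s = state (a ^ orbitCard a v) v}

/-- `a` has finite orbit-signalizer. -/
def FiniteOS {d : ℕ} (a : Equiv.Perm (Vertex d)) : Prop := (OS a).Finite

/-- A self-similar (state-closed) subgroup. -/
def SelfSimilar {d : ℕ} (G : Subgroup (Equiv.Perm (Vertex d))) : Prop :=
  ∀ g ∈ G, ∀ v : Vertex d, state g v ∈ G

/-- A contracting group: there is a finite set `N ⊆ G` such that every
`g ∈ G` has all its states in `N` from some level on. -/
def ContractingGroup {d : ℕ} (G : Subgroup (Equiv.Perm (Vertex d))) : Prop :=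
  ∃ N : Set (Equiv.Perm (Vertex d)), N.Finite ∧ N ⊆ (G : Set (Equiv.Perm (Vertex d))) ∧
    ∀ g ∈ G, ∃ n : ℕ, ∀ v : Vertex d, n ≤ v.length → state g v ∈ N

/-- A contracting automorphism: the self-similar group generated by all of its
states is contracting. -/
def ContractingAut {d : ℕ} (f : Equiv.Perm (Vertex d)) : Prop :=
  ContractingGroup (Subgroup.closure (Set.range fun v : Vertex d => state f v))

/-- The activity sequence `θ_k(g)`: the number of vertices `v` of level `k`
whose state `g|_v` acts nontrivially on the first level `X`. -/
noncomputable def theta {d : ℕ} (g : Equiv.Perm (Vertex d)) (k : ℕ) : ℕ :=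
  Nat.card {v : Vertex d // v.length = k ∧ ∃ x : Fin d, state g v [x] ≠ [x]}

/-- A bounded automorphism: a finite-state automorphism with bounded activity
sequence.  The bounded automorphisms form the group `Pol(0)`. -/
def BoundedAut {d : ℕ} (g : Equiv.Perm (Vertex d)) : Prop :=
  FiniteState g ∧ ∃ C : ℕ, ∀ k : ℕ, theta g k ≤ C

/-- A polynomial automorphism (an element of `Pol(∞)`): a finite-state
automorphism whose activity sequence is polynomially bounded. -/
def PolyAut {d : ℕ} (g : Equiv.Perm (Vertex d)) : Prop :=
  FiniteState g ∧ ∃ p : Polynomial ℕ, ∀ k : ℕ, theta g k ≤ p.eval k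

/-- A finitary automorphism (an element of `Pol(-1)`): all states at some
level are trivial. -/
def Finitary {d : ℕ} (g : Equiv.Perm (Vertex d)) : Prop :=
  ∃ k : ℕ, ∀ v : Vertex d, v.length = k → state g v = 1

/-- A functionally recursive automorphism: a member of some finitely generated
self-similar subgroup of `Aut(T)`.  These form the group `FR(X)`. -/
def FunctionallyRecursive {d : ℕ} (g : Equiv.Perm (Vertex d)) : Prop :=
  ∃ G : Subgroup (Equiv.Perm (Vertex d)), G ≤ treeAut d ∧ SelfSimilar G ∧
    (∃ S : Set (Equiv.Perm (Vertex d)), S.Finite ∧ G = Subgroup.closure S) ∧ g ∈ G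

/-!
A power `a ^ n` is trivial iff it fixes every letter `x` and has trivial state there. It fixes
`x` iff `m_x ∣ n`, and for `n = m_x * j` its state at `x` is `a_x ^ j`, since `a ^ m_x` fixes `x`
and states multiply along fixed vertices. Hence `a ^ n = 1` iff `m_x * |a_x| ∣ n` for every `x`,
i.e. iff the lcm of these numbers divides `n`. So `orderOf a` equals that lcm unconditionally
(both sides are `0` when some `a_x` has infinite order), and `a` has finite order iff the lcm is
nonzero, i.e. iff every `a_x` does, the `m_x` being positive.
-/

namespace IsTreeAut

variable {d : ℕ} {g h : Equiv.Perm (Vertex d)}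

theorem apply_append_eq_append_drop (hg : IsTreeAut g) (v w : Vertex d) :
    g (v ++ w) = g v ++ (g (v ++ w)).drop v.length := by
  obtain ⟨t, ht⟩ := hg.2 v w
  rw [← ht, List.drop_left' (hg.1 v)]

theorem bijective_drop_apply_append (hg : IsTreeAut g) (v : Vertex d) :
    Function.Bijective fun w : Vertex d => (g (v ++ w)).drop v.length := by
  refine ⟨fun w₁ w₂ hw => ?_, fun u => ?_⟩
  · have h₁₂ : g (v ++ w₁) = g (v ++ w₂) := by
      rw [hg.apply_append_eq_append_drop v w₁, hg.apply_append_eq_append_drop v w₂]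
      exact congrArg (g v ++ ·) hw
    exact List.append_cancel_left (g.injective h₁₂)
  · have hinv : IsTreeAut g⁻¹ := (treeAut d).inv_mem hg
    obtain ⟨w, hw⟩ : v <+: g⁻¹ (g v ++ u) := by
      simpa using hinv.2 (g v) u
    refine ⟨w, ?_⟩
    simp [hw, List.drop_left' (hg.1 v)]

theorem apply_append (hg : IsTreeAut g) (v w : Vertex d) :
    g (v ++ w) = g v ++ state g v w := by
  rw [state, dif_pos (hg.bijective_drop_apply_append v), Equiv.ofBijective_apply]
  exact hg.apply_append_eq_append_drop v w

theorem _root_.state_one (v : Vertex d) : state (1 : Equiv.Perm (Vertex d)) v = 1 := by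
  ext1 w
  exact List.append_cancel_left ((treeAut d).one_mem.apply_append v w).symm

theorem state_mul (hg : IsTreeAut g) (hh : IsTreeAut h) (v : Vertex d) :
    state (g * h) v = state g (h v) * state h v := by
  ext1 w
  have hgh := ((treeAut d).mul_mem hg hh).apply_append v w
  rw [Equiv.Perm.mul_apply, Equiv.Perm.mul_apply, hh.apply_append, hg.apply_append] at hgh
  exact (List.append_cancel_left hgh).symm

theorem state_pow_of_apply_eq (hg : IsTreeAut g) {v : Vertex d} (hv : g v = v) (k : ℕ) :
    state (g ^ k) v = state g v ^ k := by
  induction k with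
  | zero => simpa using state_one v
  | succ k ih => rw [pow_succ, ((treeAut d).pow_mem hg k).state_mul hg, hv, ih, pow_succ]

theorem eq_one_iff (hg : IsTreeAut g) :
    g = 1 ↔ ∀ x : Fin d, g [x] = [x] ∧ state g [x] = 1 := by
  refine ⟨?_, fun hx => Equiv.ext fun u => ?_⟩
  · rintro rfl x
    exact ⟨rfl, state_one [x]⟩
  · cases u with
    | nil => exact List.length_eq_zero_iff.mp (hg.1 [])
    | cons x t => simpa [(hx x).1, (hx x).2] using hg.apply_append [x] t

end IsTreeAut

section OrbitCard

variable {d : ℕ} (a : Equiv.Perm (Vertex d)) (v : Vertex d)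

theorem orbitCard_eq_period : orbitCard a v = MulAction.period a v := by
  have horbit : (Set.range fun n : ℤ => (a ^ n) v) = MulAction.orbit (Subgroup.zpowers a) v := by
    ext u
    simp only [Set.mem_range, MulAction.mem_orbit_iff, Subtype.exists, Subgroup.mk_smul,
      Equiv.Perm.smul_def, exists_prop, Subgroup.exists_mem_zpowers]
  rw [orbitCard, horbit, Nat.card_congr (MulAction.orbitZPowersEquiv a v), Nat.card_zmod,
    MulAction.period_eq_minimalPeriod]

theorem pow_apply_eq_self_iff_orbitCard_dvd (n : ℕ) : (a ^ n) v = v ↔ orbitCard a v ∣ n := by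
  rw [orbitCard_eq_period, ← MulAction.pow_smul_eq_iff_period_dvd, Equiv.Perm.smul_def]

variable {a}

theorem IsTreeAut.orbitCard_pos (ha : IsTreeAut a) : 0 < orbitCard a v := by
  have hfinite : (Set.range fun n : ℤ => (a ^ n) v).Finite := by
    refine (List.finite_length_eq (Fin d) v.length).subset ?_
    rintro _ ⟨n, rfl⟩
    exact ((treeAut d).zpow_mem ha n).1 v
  have := hfinite.to_subtype
  exact Nat.card_pos

theorem IsTreeAut.state_pow_orbitCard_mul (ha : IsTreeAut a) (j : ℕ) :
    state (a ^ (orbitCard a v * j)) v = state (a ^ orbitCard a v) v ^ j := by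
  rw [pow_mul]
  exact ((treeAut d).pow_mem ha _).state_pow_of_apply_eq
    ((pow_apply_eq_self_iff_orbitCard_dvd a v _).mpr dvd_rfl) j

theorem IsTreeAut.pow_apply_eq_self_and_state_eq_one_iff (ha : IsTreeAut a) (n : ℕ) :
    (a ^ n) v = v ∧ state (a ^ n) v = 1 ↔
      orbitCard a v * orderOf (state (a ^ orbitCard a v) v) ∣ n := by
  rw [pow_apply_eq_self_iff_orbitCard_dvd]
  constructor
  · rintro ⟨⟨j, rfl⟩, hj⟩
    rw [ha.state_pow_orbitCard_mul] at hj
    exact mul_dvd_mul_left _ (orderOf_dvd_of_pow_eq_one hj)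
  · rintro ⟨c, rfl⟩
    refine ⟨dvd_mul_of_dvd_left (dvd_mul_right _ _) _, ?_⟩
    rw [mul_assoc, ha.state_pow_orbitCard_mul, pow_mul, pow_orderOf_eq_one, one_pow]

end OrbitCard

section FirstLevel

variable {d : ℕ} {a : Equiv.Perm (Vertex d)}

theorem IsTreeAut.pow_eq_one_iff_lcm_dvd (ha : IsTreeAut a) (n : ℕ) :
    a ^ n = 1 ↔ (Finset.univ.lcm fun x : Fin d =>
      orbitCard a [x] * orderOf (state (a ^ orbitCard a [x]) [x])) ∣ n := by
  simp only [((treeAut d).pow_mem ha n).eq_one_iff, Finset.lcm_dvd_iff, Finset.mem_univ,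
    true_implies, ha.pow_apply_eq_self_and_state_eq_one_iff]

theorem IsTreeAut.orderOf_eq_lcm (ha : IsTreeAut a) :
    orderOf a = Finset.univ.lcm fun x : Fin d =>
      orbitCard a [x] * orderOf (state (a ^ orbitCard a [x]) [x]) :=
  Nat.dvd_antisymm (orderOf_dvd_of_pow_eq_one ((ha.pow_eq_one_iff_lcm_dvd _).mpr dvd_rfl))
    ((ha.pow_eq_one_iff_lcm_dvd _).mp (pow_orderOf_eq_one a))

end FirstLevel

theorem order_via_firstLevel_states_general
    (d : ℕ) (a : Equiv.Perm (Vertex d)) (ha : IsTreeAut a) :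
    (IsOfFinOrder a ↔
      ∀ x : Fin d, IsOfFinOrder (state (a ^ orbitCard a ([x] : Vertex d)) ([x] : Vertex d))) ∧
    (IsOfFinOrder a →
      orderOf a = Finset.univ.lcm fun x : Fin d =>
        orbitCard a ([x] : Vertex d) *
          orderOf (state (a ^ orbitCard a ([x] : Vertex d)) ([x] : Vertex d))) := by
  refine ⟨?_, fun _ => ha.orderOf_eq_lcm⟩
  simp only [← orderOf_ne_zero_iff, ha.orderOf_eq_lcm, ne_eq, Finset.lcm_eq_zero_iff,
    Finset.mem_univ, true_and, mul_eq_zero, (ha.orbitCard_pos _).ne', false_or, not_exists]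

/-- Let `a ∈ Aut(T)`, and for each first-level letter `x` let
`m_x` be the size of the orbit of `x` under `a` and `a_x = (a^{m_x})|_x`.  Then
`a` has finite order if and only if every `a_x` has finite order, in which case
the order of `a` equals `lcm` of the numbers `m_x·|a_x|`. -/
theorem order_via_firstLevel_states
    (d : ℕ) (hd : 2 ≤ d) (a : Equiv.Perm (Vertex d)) (ha : IsTreeAut a) :
    (IsOfFinOrder a ↔
      ∀ x : Fin d, IsOfFinOrder (state (a ^ orbitCard a ([x] : Vertex d)) ([x] : Vertex d))) ∧
    (IsOfFinOrder a →
      orderOf a = Finset.univ.lcm fun x : Fin d =>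
        orbitCard a ([x] : Vertex d) *
          orderOf (state (a ^ orbitCard a ([x] : Vertex d)) ([x] : Vertex d))) :=
  order_via_firstLevel_states_general d a ha
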